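/- Let μ be a finite positive Borel measure on ℂ with μ({ζ}) = 0, and let M(w) = ∫ 1/|u - w| dμ(u) be its Newton potential. Then for every ε > 0, the set Π(ε) = {w ∈ ℂ : |w - ζ| · M(w) > ε} has zero density at ζ, i.e., lim_{r→0+} L(Π(ε) ∩ D(ζ,r))/(π r²) = 0. -/

import Mathlib

/-!
By Chebyshev's inequality, the proportion of `D(ζ, r)` occupied by `Π(ε)` is at most `ε⁻¹` times
the mean of `|w - ζ| M(w)` over the disk, and by Tonelli this mean is `∫ A_r(u) dμ(u)`, where
`A_r(u)` is the mean of `|w - ζ| / |w - u|` over `D(ζ, r)`. In polar coordinates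
`∫_{D(u, r)} |w - u|⁻¹ dw = 2πr`, whence `A_r(u) ≤ 3` for all `u`; and `A_r(u) ≤ 2r / |u - ζ|`
once `r ≤ |u - ζ| / 2`. So `A_r → 0` pointwise off `ζ`, a `μ`-null point, and dominated
convergence gives `∫ A_r dμ → 0`.
-/

open MeasureTheory Metric ENNReal Filter

/-- The Newton potential `M_μ(z) = ∫ 1/|w - z| dμ(w)` of a measure on `ℂ`. -/
noncomputable def newtonPot (μ : Measure ℂ) (z : ℂ) : ℝ≥0∞ :=
  ∫⁻ w, (ENNReal.ofReal ‖w - z‖)⁻¹ ∂μ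

open Set Topology

theorem meas_lt_inter_div_le_setLAverage_div {α : Type*} [MeasurableSpace α] {μ : Measure α}
    {s : Set α} {f : α → ℝ≥0∞} (hf : AEMeasurable f (μ.restrict s)) {c : ℝ≥0∞} (hc : c ≠ 0)
    (hc' : c ≠ ∞) :
    μ ({x | c < f x} ∩ s) / μ s ≤ (⨍⁻ x in s, f x ∂μ) / c := by
  rw [setLAverage_eq, ENNReal.div_right_comm]
  gcongr
  calc μ ({x | c < f x} ∩ s) ≤ μ ({x | c ≤ f x} ∩ s) :=
        measure_mono (inter_subset_inter_left s fun x (hx : c < f x) ↦ hx.le)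
    _ ≤ μ.restrict s {x | c ≤ f x} := Measure.le_restrict_apply _ _
    _ ≤ (∫⁻ x in s, f x ∂μ) / c := meas_ge_le_lintegral_div hf hc hc'

theorem volume_ball_eq_ofReal_pi_mul_sq (c : ℂ) {r : ℝ} (hr : 0 ≤ r) :
    volume (ball c r) = ENNReal.ofReal (Real.pi * r ^ 2) := by
  rw [Complex.volume_ball, ← ENNReal.ofReal_pow hr, ← ofReal_coe_nnreal, NNReal.coe_real_pi,
    ← ENNReal.ofReal_mul (by positivity), mul_comm]

theorem measurable_newtonPot (μ : Measure ℂ) [SFinite μ] : Measurable (newtonPot μ) :=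
  Measurable.lintegral_prod_left' (f := fun p : ℂ × ℂ ↦ (ENNReal.ofReal ‖p.1 - p.2‖)⁻¹)
    (by fun_prop)

theorem lintegral_ball_zero_inv_norm {r : ℝ} (hr : 0 ≤ r) :
    ∫⁻ w in ball (0 : ℂ) r, (ENNReal.ofReal ‖w‖)⁻¹ = ENNReal.ofReal (2 * Real.pi * r) := by
  have hpolar : ∀ p ∈ Ioi (0 : ℝ) ×ˢ Ioo (-Real.pi) Real.pi,
      ENNReal.ofReal p.1 • (ball (0 : ℂ) r).indicator (fun w ↦ (ENNReal.ofReal ‖w‖)⁻¹)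
        (Complex.polarCoord.symm p) = (Iio r ×ˢ univ).indicator 1 p := by
    rintro ⟨ρ, θ⟩ ⟨hρ, -⟩
    have hnorm : ‖Complex.polarCoord.symm (ρ, θ)‖ = ρ := by
      rw [Complex.norm_polarCoord_symm, abs_of_pos hρ]
    by_cases hρr : ρ < r
    · rw [indicator_of_mem (by rwa [mem_ball_zero_iff, hnorm]), hnorm,
        indicator_of_mem (by exact ⟨hρr, trivial⟩), smul_eq_mul,
        ENNReal.mul_inv_cancel (by simpa using hρ) ofReal_ne_top, Pi.one_apply]
    · rw [indicator_of_notMem (by rwa [mem_ball_zero_iff, hnorm]),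
        indicator_of_notMem (by exact fun h ↦ hρr h.1), smul_zero]
  rw [← lintegral_indicator measurableSet_ball, ← Complex.lintegral_comp_polarCoord_symm,
    polarCoord_target, setLIntegral_congr_fun (measurableSet_Ioi.prod measurableSet_Ioo) hpolar,
    lintegral_indicator_one (measurableSet_Iio.prod MeasurableSet.univ),
    Measure.restrict_apply (measurableSet_Iio.prod MeasurableSet.univ), prod_inter_prod,
    Measure.volume_eq_prod, Measure.prod_prod, Iio_inter_Ioi, univ_inter, Real.volume_Ioo,
    Real.volume_Ioo, ← ENNReal.ofReal_mul (by simpa using hr)]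
  congr 1
  ring

theorem lintegral_ball_inv_norm_sub (u : ℂ) {r : ℝ} (hr : 0 ≤ r) :
    ∫⁻ w in ball u r, (ENNReal.ofReal ‖w - u‖)⁻¹ = ENNReal.ofReal (2 * Real.pi * r) := by
  have hball : (· + u) ⁻¹' ball u r = ball 0 r := by
    ext w; simp [dist_eq_norm]
  rw [← (measurePreserving_add_right volume u).setLIntegral_comp_preimage_emb
    (measurableEmbedding_addRight u), hball]
  simpa using lintegral_ball_zero_inv_norm hr

theorem lintegral_ball_inv_norm_sub_le (c u : ℂ) {r : ℝ} (hr : 0 < r) :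
    ∫⁻ w in ball c r, (ENNReal.ofReal ‖w - u‖)⁻¹ ≤ ENNReal.ofReal (3 * Real.pi * r) := by
  have hfar : ∀ w ∈ ball c r \ ball u r, (ENNReal.ofReal ‖w - u‖)⁻¹ ≤ (ENNReal.ofReal r)⁻¹ :=
    fun w hw ↦ by
      gcongr
      simpa [dist_eq_norm] using hw.2
  calc ∫⁻ w in ball c r, (ENNReal.ofReal ‖w - u‖)⁻¹
      ≤ (∫⁻ w in ball u r, (ENNReal.ofReal ‖w - u‖)⁻¹)
        + ∫⁻ w in ball c r \ ball u r, (ENNReal.ofReal ‖w - u‖)⁻¹ :=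
        (lintegral_mono_set (sdiff_subset_iff.mp (subset_refl (ball c r \ ball u r)))).trans
          (lintegral_union_le _ _ _)
    _ ≤ ENNReal.ofReal (2 * Real.pi * r) + (ENNReal.ofReal r)⁻¹ * volume (ball c r) := by
        rw [lintegral_ball_inv_norm_sub u hr.le]
        gcongr
        calc _ ≤ ∫⁻ _ in ball c r \ ball u r, (ENNReal.ofReal r)⁻¹ :=
              setLIntegral_mono' (measurableSet_ball.diff measurableSet_ball) hfar
          _ ≤ _ := by rw [setLIntegral_const]; gcongr; exact sdiff_subset
    _ = ENNReal.ofReal (3 * Real.pi * r) := by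
        rw [volume_ball_eq_ofReal_pi_mul_sq c hr.le, ← ENNReal.ofReal_inv_of_pos hr,
          ← ENNReal.ofReal_mul (by positivity), ← ENNReal.ofReal_add (by positivity) (by positivity)]
        congr 1
        field_simp
        ring

noncomputable def meanDistRatio (ζ : ℂ) (r : ℝ) (u : ℂ) : ℝ≥0∞ :=
  ⨍⁻ w in ball ζ r, ENNReal.ofReal ‖w - ζ‖ * (ENNReal.ofReal ‖w - u‖)⁻¹ ∂volume

theorem meanDistRatio_le_three (ζ u : ℂ) {r : ℝ} (hr : 0 < r) : meanDistRatio ζ r u ≤ 3 := by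
  rw [meanDistRatio, setLAverage_eq]
  refine ENNReal.div_le_of_le_mul ?_
  calc ∫⁻ w in ball ζ r, ENNReal.ofReal ‖w - ζ‖ * (ENNReal.ofReal ‖w - u‖)⁻¹
      ≤ ∫⁻ w in ball ζ r, ENNReal.ofReal r * (ENNReal.ofReal ‖w - u‖)⁻¹ :=
        setLIntegral_mono' measurableSet_ball fun w hw ↦ by
          gcongr
          simpa [dist_eq_norm] using (mem_ball.mp hw).le
    _ = ENNReal.ofReal r * ∫⁻ w in ball ζ r, (ENNReal.ofReal ‖w - u‖)⁻¹ :=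
        lintegral_const_mul _ (by fun_prop)
    _ ≤ ENNReal.ofReal r * ENNReal.ofReal (3 * Real.pi * r) := by
        gcongr; exact lintegral_ball_inv_norm_sub_le ζ u hr
    _ = 3 * volume (ball ζ r) := by
        rw [volume_ball_eq_ofReal_pi_mul_sq ζ hr.le, ← ENNReal.ofReal_mul hr.le,
          ← ofReal_ofNat, ← ENNReal.ofReal_mul (by norm_num)]
        congr 1
        ring

theorem meanDistRatio_le_of_two_mul_le (ζ u : ℂ) {r : ℝ} (hr : 0 < r)
    (hu : 2 * r ≤ ‖u - ζ‖) : meanDistRatio ζ r u ≤ ENNReal.ofReal (2 * r / ‖u - ζ‖) := by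
  have hball : volume (ball ζ r) ≠ 0 := (measure_ball_pos volume ζ hr).ne'
  have hbound : ∀ w ∈ ball ζ r, ENNReal.ofReal ‖w - ζ‖ * (ENNReal.ofReal ‖w - u‖)⁻¹
      ≤ ENNReal.ofReal (2 * r / ‖u - ζ‖) := fun w hw ↦ by
    have hwζ : ‖w - ζ‖ < r := by simpa [dist_eq_norm] using hw
    have hwu : ‖u - ζ‖ / 2 ≤ ‖w - u‖ := by
      linarith [norm_sub_le_norm_sub_add_norm_sub u w ζ, norm_sub_rev u w]
    calc ENNReal.ofReal ‖w - ζ‖ * (ENNReal.ofReal ‖w - u‖)⁻¹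
        ≤ ENNReal.ofReal r * (ENNReal.ofReal (‖u - ζ‖ / 2))⁻¹ := by gcongr
      _ = ENNReal.ofReal (2 * r / ‖u - ζ‖) := by
        rw [← ENNReal.ofReal_inv_of_pos (by linarith), ← ENNReal.ofReal_mul hr.le]
        congr 1
        field_simp
  calc meanDistRatio ζ r u ≤ ⨍⁻ _ in ball ζ r, ENNReal.ofReal (2 * r / ‖u - ζ‖) ∂volume :=
        laverage_mono_ae ((ae_restrict_iff' measurableSet_ball).2 (.of_forall hbound))
    _ = ENNReal.ofReal (2 * r / ‖u - ζ‖) := setLAverage_const hball measure_ball_lt_top.ne _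

theorem tendsto_meanDistRatio {ζ u : ℂ} (hu : u ≠ ζ) :
    Tendsto (fun r ↦ meanDistRatio ζ r u) (𝓝[>] (0 : ℝ)) (𝓝 0) := by
  have hd : 0 < ‖u - ζ‖ := norm_pos_iff.2 (sub_ne_zero.2 hu)
  have hbound : Tendsto (fun r : ℝ ↦ ENNReal.ofReal (2 * r / ‖u - ζ‖)) (𝓝[>] (0 : ℝ)) (𝓝 0) := by
    have : Tendsto (fun r : ℝ ↦ 2 * r / ‖u - ζ‖) (𝓝 0) (𝓝 0) := by
      simpa using ((continuous_const_mul 2).div_const ‖u - ζ‖).tendsto 0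
    simpa using (ENNReal.tendsto_ofReal this).mono_left nhdsWithin_le_nhds
  have hsmall : ∀ᶠ r in 𝓝[>] (0 : ℝ), r ∈ Ioo 0 (‖u - ζ‖ / 2) :=
    Ioo_mem_nhdsGT (by positivity)
  refine tendsto_of_tendsto_of_tendsto_of_le_of_le' tendsto_const_nhds hbound
    (.of_forall fun _ ↦ bot_le) ?_
  filter_upwards [hsmall] with r hr
  exact meanDistRatio_le_of_two_mul_le ζ u hr.1 (by linarith [hr.2])

theorem measurable_meanDistRatio (ζ : ℂ) (r : ℝ) : Measurable (meanDistRatio ζ r) := by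
  unfold meanDistRatio
  simp_rw [setLAverage_eq]
  exact (Measurable.lintegral_prod_left' (μ := volume.restrict (ball ζ r)) (f := fun p : ℂ × ℂ ↦
    ENNReal.ofReal ‖p.1 - ζ‖ * (ENNReal.ofReal ‖p.1 - p.2‖)⁻¹) (by fun_prop)).div_const _

theorem lintegral_meanDistRatio (μ : Measure ℂ) [SFinite μ] (ζ : ℂ) (r : ℝ) :
    ∫⁻ u, meanDistRatio ζ r u ∂μ
      = ⨍⁻ w in ball ζ r, ENNReal.ofReal ‖w - ζ‖ * newtonPot μ w ∂volume := by
  simp_rw [meanDistRatio, setLAverage_eq', newtonPot]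
  rw [lintegral_lintegral_swap (by fun_prop)]
  congr! 2 with w
  rw [← lintegral_const_mul _ (by fun_prop)]
  simp_rw [norm_sub_rev]

theorem tendsto_lintegral_meanDistRatio (μ : Measure ℂ) [IsFiniteMeasure μ] {ζ : ℂ}
    (hζ : μ {ζ} = 0) :
    Tendsto (fun r ↦ ∫⁻ u, meanDistRatio ζ r u ∂μ) (𝓝[>] (0 : ℝ)) (𝓝 0) := by
  have hae : ∀ᵐ u ∂μ, u ≠ ζ := measure_eq_zero_iff_ae_notMem.1 hζ
  simpa using tendsto_lintegral_filter_of_dominated_convergence (l := 𝓝[>] (0 : ℝ)) (fun _ ↦ 3)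
    (.of_forall (measurable_meanDistRatio ζ))
    (eventually_mem_nhdsWithin.mono fun r hr ↦ .of_forall (meanDistRatio_le_three ζ · hr))
    (by simp [lintegral_const, ENNReal.mul_eq_top])
    (hae.mono fun u hu ↦ tendsto_meanDistRatio hu)

theorem stmt_7 (μ : Measure ℂ) [IsFiniteMeasure μ] (ζ : ℂ) (hζ : μ {ζ} = 0)
    (ε : ℝ) (hε : 0 < ε) :
    Tendsto (fun r : ℝ =>
        volume ({w : ℂ | ENNReal.ofReal ε < ENNReal.ofReal ‖w - ζ‖ * newtonPot μ w}
            ∩ ball ζ r) / ENNReal.ofReal (Real.pi * r ^ 2))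
      (nhdsWithin 0 (Set.Ioi 0)) (nhds 0) := by
  have hε0 : ENNReal.ofReal ε ≠ 0 := (ENNReal.ofReal_pos.2 hε).ne'
  have hlim := ENNReal.Tendsto.div_const (tendsto_lintegral_meanDistRatio μ hζ) (.inr hε0)
  rw [ENNReal.zero_div] at hlim
  refine tendsto_of_tendsto_of_tendsto_of_le_of_le' tendsto_const_nhds hlim
    (.of_forall fun _ ↦ bot_le) ?_
  filter_upwards [self_mem_nhdsWithin] with r (hr : 0 < r)
  rw [← volume_ball_eq_ofReal_pi_mul_sq ζ hr.le, lintegral_meanDistRatio]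
  exact meas_lt_inter_div_le_setLAverage_div
    ((by fun_prop : Measurable fun w : ℂ ↦ ENNReal.ofReal ‖w - ζ‖).mul
      (measurable_newtonPot μ)).aemeasurable hε0 ofReal_ne_top
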